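/- Under Assumptions 1, 3 and 4, the moments of X_t satisfy: E|X_t|^ν = O(t^{max{0, ν−1}} exp(C₀ t)) for some 0 < C₀ < ∞ when E ln|φ + b₀| ≥ 0 with P(b₀ = 0) < 1, and also when E ln|φ + b₀| > 0 with P(b₀ = 0) = 1; and E|X_t|^ν = O(t^{1 + max{0, ν−1}}) when E ln|φ + b₀| = 0 with P(b₀ = 0) = 1. Here ν is the moment exponent of Assumption 1 and, when Assumption 4(ii) holds, ν is chosen so that ν < γ. -/

import Mathlib

/-!
Unrolling the recursion gives `X_t = ∑_{s=0}^t e_s ∏_{k=s+1}^t (φ + b_k)` with `e_0 := X_0`.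
The power-mean inequality bounds `|X_t|^ν` by `(t+1)^{max(0,ν-1)}` times the sum of the `ν`-th
powers of the summands, and since `e_s` is independent of the i.i.d. coefficients `b_k`, `k > s`,
the `s`-th of these has expectation `E|e_s|^ν (E|φ+b_0|^ν)^{t-s}`. Hence
`E|X_t|^ν ≤ (t+1)^{1+max(0,ν-1)} K B^t` with `K = E|X_0|^ν + E|e_0|^ν` and
`B = max(E|φ+b_0|^ν, 1)`, which is `O(t^{max(0,ν-1)} e^{Bt})`. In the unit-root case `b_0 = 0` a.s. and `E ln|φ| = 0` force
`|φ| ≤ 1`, so `B = 1`.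
-/

open MeasureTheory ProbabilityTheory Filter
open scoped ENNReal NNReal Topology ProbabilityTheory

namespace RCAR

variable {Ω : Type*} [MeasureSpace Ω]

/-- The RCAR(1) process `X_t = (φ + b_t) X_{t-1} + e_t` started from `X₀`. -/
noncomputable def Xproc (φ : ℝ) (b e : ℤ → Ω → ℝ) (X0 : Ω → ℝ) : ℕ → Ω → ℝ
  | 0 => X0
  | t + 1 => fun ω => (φ + b (t + 1) ω) * Xproc φ b e X0 t ω + e (t + 1) ω

/-- The strictly stationary solution `X̄_t = ∑_{s ≤ t} e_s ∏_{z=s+1}^t (φ + b_z)`. -/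
noncomputable def Xbar (φ : ℝ) (b e : ℤ → Ω → ℝ) (t : ℤ) (ω : Ω) : ℝ :=
  ∑' k : ℕ, e (t - k) ω * ∏ i ∈ Finset.range k, (φ + b (t - i) ω)

/-- `v_p = p⁻¹ ∑_{t=1}^p X_t²`. -/
noncomputable def vp (X : ℕ → Ω → ℝ) (p : ℕ) (ω : Ω) : ℝ :=
  (p : ℝ)⁻¹ * ∑ t ∈ Finset.Icc 1 p, (X t ω) ^ 2

/-- `D_T = (T-p)⁻¹ ∑_{t=p+1}^T v_p / (v_p + X_t²)`. -/
noncomputable def DT (X : ℕ → Ω → ℝ) (p T : ℕ) (ω : Ω) : ℝ :=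
  ((T : ℝ) - (p : ℝ))⁻¹ * ∑ t ∈ Finset.Icc (p + 1) T, vp X p ω / (vp X p ω + (X t ω) ^ 2)

/-- `E log |φ + b₀| < 0`, allowing the value `-∞`: the positive part of the integral is
(finite and) strictly smaller than the negative part. -/
def ElogNeg (φ : ℝ) (b0 : Ω → ℝ) : Prop :=
  ∫⁻ ω, ENNReal.ofReal (Real.log |φ + b0 ω|) ∂ℙ
    < ∫⁻ ω, ENNReal.ofReal (-Real.log |φ + b0 ω|) ∂ℙ

/-- `E log |φ + b₀| ≥ 0` (in particular the expectation is finite). -/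
def ElogNonneg (φ : ℝ) (b0 : Ω → ℝ) : Prop :=
  Integrable (fun ω => Real.log |φ + b0 ω|) ℙ ∧ 0 ≤ ∫ ω, Real.log |φ + b0 ω| ∂ℙ

/-- `E log |φ + b₀| = 0`. -/
def ElogZero (φ : ℝ) (b0 : Ω → ℝ) : Prop :=
  Integrable (fun ω => Real.log |φ + b0 ω|) ℙ ∧ ∫ ω, Real.log |φ + b0 ω| ∂ℙ = 0

/-- `E log |φ + b₀| > 0`. -/
def ElogPos (φ : ℝ) (b0 : Ω → ℝ) : Prop :=
  Integrable (fun ω => Real.log |φ + b0 ω|) ℙ ∧ 0 < ∫ ω, Real.log |φ + b0 ω| ∂ℙ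

/-- Assumption 1: `{b_t}` and `{e_t}` are mutually independent sequences of i.i.d.
symmetric random variables with finite `ν`-th absolute moments (`ν > 0`), and `X₀` is
independent of `{(b_t, e_t), t ≥ 1}` with `E|X₀|^ν < ∞`. -/
def Assumption1 (ν : ℝ) (b e : ℤ → Ω → ℝ) (X0 : Ω → ℝ) : Prop :=
  (∀ t, Measurable (b t)) ∧ (∀ t, Measurable (e t)) ∧ Measurable X0 ∧
  IndepFun (fun ω (t : ℤ) => b t ω) (fun ω (t : ℤ) => e t ω) ℙ ∧
  iIndepFun b ℙ ∧ (∀ t, IdentDistrib (b t) (b 0) ℙ ℙ) ∧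
  iIndepFun e ℙ ∧ (∀ t, IdentDistrib (e t) (e 0) ℙ ℙ) ∧
  IdentDistrib (b 0) (fun ω => -b 0 ω) ℙ ℙ ∧
  IdentDistrib (e 0) (fun ω => -e 0 ω) ℙ ℙ ∧
  0 < ν ∧ Integrable (fun ω => |b 0 ω| ^ ν) ℙ ∧ Integrable (fun ω => |e 0 ω| ^ ν) ℙ ∧
  Integrable (fun ω => |X0 ω| ^ ν) ℙ ∧
  IndepFun X0 (fun ω (t : ℕ) => (b (t + 1 : ℤ) ω, e (t + 1 : ℤ) ω)) ℙ

/-- Assumption 2: under stationarity, non-degeneracy of `X̄₀` and of `e₀`. -/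
def Assumption2 (φ : ℝ) (b e : ℤ → Ω → ℝ) : Prop :=
  ElogNeg φ (b 0) → (ℙ {ω | Xbar φ b e 0 ω = 0} < 1 ∧ ℙ {ω | e 0 ω = 0} < 1)

/-- `Y` has a (Lebesgue) density which is bounded. -/
def HasBoundedDensity (Y : Ω → ℝ) : Prop :=
  ∃ (f : ℝ → ℝ≥0∞) (M : ℝ≥0), (∀ x, f x ≤ M) ∧ Measure.map Y ℙ = volume.withDensity f

/-- Assumption 3: in the nonstationary regime, `e₀` has a bounded density; if the
autoregressive coefficient is genuinely random then `ln|φ + b₀|` has a finite `k`-th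
moment for some `k > 2`; and `E X₀² < ∞`. -/
def Assumption3 (φ : ℝ) (b e : ℤ → Ω → ℝ) (X0 : Ω → ℝ) : Prop :=
  ElogNonneg φ (b 0) →
    (HasBoundedDensity (e 0) ∧
     (ℙ {ω | b 0 ω = 0} < 1 →
        ∃ k : ℝ, 2 < k ∧ Integrable (fun ω => (abs (Real.log |φ + b 0 ω|)) ^ k) ℙ) ∧
     Integrable (fun ω => (X0 ω) ^ 2) ℙ)

/-- Assumption 4(i): `E X₀² < ∞` and `E|e₀|^{ν'} < ∞` for some `ν' > 2`. -/
def Assumption4i (e : ℤ → Ω → ℝ) (X0 : Ω → ℝ) : Prop :=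
  Integrable (fun ω => (X0 ω) ^ 2) ℙ ∧ ∃ ν' : ℝ, 2 < ν' ∧ Integrable (fun ω => |e 0 ω| ^ ν') ℙ

/-- Assumption 4(ii): regularly varying tails of index `γ ∈ (0,2]` for `e₀`, i.e.
`1 - F(x) = C₀ x^{-γ} + ς(x) x^{-γ}` for `x ≥ x₀`, and `E|X₀|^γ < ∞`. -/
def Assumption4ii (γ : ℝ) (e : ℤ → Ω → ℝ) (X0 : Ω → ℝ) : Prop :=
  0 < γ ∧ γ ≤ 2 ∧
  (∃ (C0 x0 : ℝ) (ς : ℝ → ℝ), 0 < C0 ∧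
    (∀ x : ℝ, x0 ≤ x → (ℙ {ω | x < e 0 ω}).toReal = C0 * x ^ (-γ) + ς x * x ^ (-γ)) ∧
    Tendsto ς atTop (𝓝 0) ∧
    AntitoneOn (fun x => ς x * x ^ (-γ)) (Set.Ici x0)) ∧
  Integrable (fun ω => |X0 ω| ^ γ) ℙ

/-- Assumption 4: in the unit-root case (`E ln|φ + b₀| = 0` with `b₀ = 0` a.s.),
either (i) or (ii) holds. -/
def Assumption4 (φ : ℝ) (b e : ℤ → Ω → ℝ) (X0 : Ω → ℝ) : Prop :=
  (ElogZero φ (b 0) ∧ (∀ᵐ ω ∂(ℙ : Measure Ω), b 0 ω = 0)) →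
    (Assumption4i e X0 ∨ ∃ γ : ℝ, Assumption4ii γ e X0)

end RCAR

namespace RCAR

/-- Assumption 5: `p = p(T) → ∞` with `lim sup_T p(T)/ln ln T < ∞`. -/
def Assumption5 (p : ℕ → ℕ) : Prop :=
  Tendsto p atTop atTop ∧
  ∃ C : ℝ, ∀ᶠ T in atTop, (p T : ℝ) ≤ C * Real.log (Real.log T)

end RCAR

namespace ENNReal

theorem rpow_sum_le_card_rpow_mul_sum_rpow {ι : Type*} (s : Finset ι) (f : ι → ℝ≥0∞) {p : ℝ}
    (hp : 0 < p) :
    (∑ i ∈ s, f i) ^ p ≤ (s.card : ℝ≥0∞) ^ max 0 (p - 1) * ∑ i ∈ s, f i ^ p := by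
  rcases le_total p 1 with hp1 | hp1
  · rw [max_eq_left (by linarith), rpow_zero, one_mul]
    induction s using Finset.cons_induction with
    | empty => simp [zero_rpow_of_pos hp]
    | cons a s ha ih =>
      rw [Finset.sum_cons, Finset.sum_cons]
      exact (rpow_add_le_add_rpow _ _ hp.le hp1).trans (by gcongr)
  · rw [max_eq_right (by linarith)]
    exact rpow_sum_le_const_mul_sum_rpow s f hp1

end ENNReal

namespace ProbabilityTheory

theorem lintegral_mul_prod_eq_of_indepFun {Ω ι : Type*} [MeasurableSpace Ω] {μ : Measure Ω}
    {f : Ω → ℝ≥0∞} {g : ι → Ω → ℝ≥0∞} (hf : Measurable f) (hg : ∀ i, Measurable (g i))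
    (hfg : IndepFun f (fun ω i => g i ω) μ) (hg_indep : iIndepFun g μ) (s : Finset ι) :
    ∫⁻ ω, f ω * ∏ i ∈ s, g i ω ∂μ = (∫⁻ ω, f ω ∂μ) * ∏ i ∈ s, ∫⁻ ω, g i ω ∂μ := by
  have h_prod : Measurable fun w : ι → ℝ≥0∞ => ∏ i ∈ s, w i :=
    Finset.measurable_prod _ fun i _ => measurable_pi_apply i
  rw [lintegral_mul_eq_lintegral_mul_lintegral_of_indepFun'' (g := fun ω => ∏ i ∈ s, g i ω)
    hf.aemeasurable (h_prod.comp (measurable_pi_lambda _ hg)).aemeasurable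
    (hfg.comp measurable_id h_prod),
    lintegral_prod_eq_prod_lintegral_of_indepFun s g hg_indep hg]

end ProbabilityTheory

theorem MeasureTheory.Integrable.lintegral_enorm_const_add_rpow_lt_top {Ω : Type*}
    [MeasurableSpace Ω] {μ : Measure Ω} [IsFiniteMeasure μ] {f : Ω → ℝ} {p : ℝ} (hp : 0 < p)
    (hf_meas : AEStronglyMeasurable f μ) (hf : Integrable (fun ω => |f ω| ^ p) μ) (c : ℝ) :
    ∫⁻ ω, ‖c + f ω‖ₑ ^ p ∂μ < ∞ := by
  have hp' : ENNReal.ofReal p ≠ 0 := by simpa using hp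
  have hf_Lp : MemLp f (ENNReal.ofReal p) μ := by
    refine (integrable_norm_rpow_iff hf_meas hp' ENNReal.ofReal_ne_top).1 ?_
    simpa only [Real.norm_eq_abs, ENNReal.toReal_ofReal hp.le] using hf
  have := ((memLp_const c).add hf_Lp).eLpNorm_lt_top
  rwa [eLpNorm_lt_top_iff_lintegral_rpow_enorm_lt_top hp' ENNReal.ofReal_ne_top,
    ENNReal.toReal_ofReal hp.le] at this

theorem Real.add_one_rpow_le_two_rpow_mul_rpow {t r : ℝ} (ht : 1 ≤ t) (hr : 0 ≤ r) :
    (t + 1) ^ r ≤ 2 ^ r * t ^ r := by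
  rw [← Real.mul_rpow zero_le_two (by linarith)]
  exact Real.rpow_le_rpow (by linarith) (by linarith) hr

theorem Real.add_one_mul_pow_le_exp_mul {B : ℝ} (hB : 0 ≤ B) (t : ℕ) :
    ((t : ℝ) + 1) * B ^ t ≤ Real.exp (B * t) := by
  have hB_le : B ≤ Real.exp (B - 1) := by linarith [Real.add_one_le_exp (B - 1)]
  calc ((t : ℝ) + 1) * B ^ t ≤ Real.exp t * Real.exp (B - 1) ^ t := by
        gcongr
        exact Real.add_one_le_exp _
    _ = Real.exp (B * t) := by
        rw [← Real.exp_nat_mul, ← Real.exp_add]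
        ring_nf

theorem Real.add_one_rpow_mul_pow_le_two_rpow_mul_exp {q B : ℝ} (hq : 0 ≤ q) (hB : 0 ≤ B)
    {t : ℕ} (ht : 1 ≤ t) :
    ((t : ℝ) + 1) ^ (q + 1) * B ^ t ≤ 2 ^ (q + 1) * (t : ℝ) ^ q * Real.exp (B * t) := by
  have ht' : (1 : ℝ) ≤ t := by exact_mod_cast ht
  rw [Real.rpow_add_one (by positivity), mul_assoc]
  calc ((t : ℝ) + 1) ^ q * (((t : ℝ) + 1) * B ^ t) ≤ 2 ^ q * (t : ℝ) ^ q * Real.exp (B * t) := by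
        gcongr
        · exact Real.add_one_rpow_le_two_rpow_mul_rpow ht' hq
        · exact Real.add_one_mul_pow_le_exp_mul hB t
    _ ≤ 2 ^ (q + 1) * (t : ℝ) ^ q * Real.exp (B * t) := by
        gcongr
        · exact one_le_two
        · linarith

namespace RCAR

variable {Ω : Type*}

def innovation (e : ℤ → Ω → ℝ) (X0 : Ω → ℝ) : ℕ → Ω → ℝ
  | 0 => X0
  | s + 1 => e (s + 1)

theorem Xproc_eq_sum (φ : ℝ) (b e : ℤ → Ω → ℝ) (X0 : Ω → ℝ) (t : ℕ) (ω : Ω) :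
    Xproc φ b e X0 t ω =
      ∑ s ∈ Finset.range (t + 1),
        innovation e X0 s ω * ∏ k ∈ Finset.Ico s t, (φ + b (k + 1) ω) := by
  induction t with
  | zero => simp [Xproc, innovation]
  | succ t ih =>
    rw [Finset.sum_range_succ _ (t + 1), Finset.Ico_self, Finset.prod_empty, mul_one]
    dsimp only [Xproc]
    rw [ih, Finset.mul_sum]
    congr 1
    refine Finset.sum_congr rfl fun s hs => ?_
    rw [Finset.prod_Ico_succ_top (Nat.lt_succ_iff.mp (Finset.mem_range.mp hs))]
    ring

theorem enorm_Xproc_rpow_le {ν : ℝ} (hν : 0 < ν) (φ : ℝ) (b e : ℤ → Ω → ℝ) (X0 : Ω → ℝ)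
    (t : ℕ) (ω : Ω) :
    ‖Xproc φ b e X0 t ω‖ₑ ^ ν ≤ ((t : ℝ≥0∞) + 1) ^ max 0 (ν - 1) *
      ∑ s ∈ Finset.range (t + 1),
        ‖innovation e X0 s ω‖ₑ ^ ν * ∏ k ∈ Finset.Ico s t, ‖φ + b (k + 1) ω‖ₑ ^ ν := by
  rw [Xproc_eq_sum]
  calc _ ≤ (∑ s ∈ Finset.range (t + 1),
          ‖innovation e X0 s ω * ∏ k ∈ Finset.Ico s t, (φ + b (k + 1) ω)‖ₑ) ^ ν :=
        ENNReal.rpow_le_rpow (enorm_sum_le _ _) hν.le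
    _ ≤ _ := by
        refine (ENNReal.rpow_sum_le_card_rpow_mul_sum_rpow _ _ hν).trans_eq ?_
        rw [Finset.card_range, Nat.cast_succ]
        refine congrArg _ (Finset.sum_congr rfl fun s _ => ?_)
        have h_prod : ‖∏ k ∈ Finset.Ico s t, (φ + b (k + 1) ω)‖ₑ =
            ∏ k ∈ Finset.Ico s t, ‖φ + b (k + 1) ω‖ₑ := by
          simp only [enorm, nnnorm_prod, ENNReal.ofNNReal_finsetProd]
        rw [enorm_mul, ENNReal.mul_rpow_of_nonneg _ _ hν.le, h_prod,
          ENNReal.prod_rpow_of_nonneg hν.le]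

section Moments

variable [MeasureSpace Ω] {φ ν : ℝ} {b e : ℤ → Ω → ℝ} {X0 : Ω → ℝ}

theorem measurable_innovation (h1 : Assumption1 ν b e X0) :
    ∀ s, Measurable (innovation e X0 s) := by
  obtain ⟨-, he_meas, hX0_meas, -⟩ := h1
  rintro (_ | s)
  · exact hX0_meas
  · exact he_meas _

theorem indepFun_innovation_shifted_coeffs (h1 : Assumption1 ν b e X0) :
    ∀ s, IndepFun (innovation e X0 s) (fun ω (k : ℕ) => b (k + 1) ω) ℙ := by
  obtain ⟨-, -, -, hbe, -, -, -, -, -, -, -, -, -, -, hX0⟩ := h1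
  rintro (_ | s)
  · exact hX0.comp measurable_id
      (measurable_pi_lambda (fun w k => (w k).1) fun k => (measurable_pi_apply k).fst)
  · exact hbe.symm.comp (measurable_pi_apply ((s : ℤ) + 1))
      (measurable_pi_lambda (fun w (k : ℕ) => w ((k : ℤ) + 1)) fun k => measurable_pi_apply _)

theorem lintegral_innovation_mul_prod (h1 : Assumption1 ν b e X0) (s t : ℕ) :
    ∫⁻ ω, ‖innovation e X0 s ω‖ₑ ^ ν * ∏ k ∈ Finset.Ico s t, ‖φ + b (k + 1) ω‖ₑ ^ ν ∂ℙ =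
      (∫⁻ ω, ‖innovation e X0 s ω‖ₑ ^ ν ∂ℙ) * (∫⁻ ω, ‖φ + b 0 ω‖ₑ ^ ν ∂ℙ) ^ (t - s) := by
  have h_innov_meas := measurable_innovation h1 s
  have h_innov_indep := indepFun_innovation_shifted_coeffs h1 s
  obtain ⟨hb_meas, -, -, -, hb_indep, hb_ident, -⟩ := h1
  have h_pow : Measurable fun x : ℝ => ‖x‖ₑ ^ ν := measurable_enorm.pow_const ν
  have h_coeff : Measurable fun x : ℝ => ‖φ + x‖ₑ ^ ν := h_pow.comp (measurable_const_add φ)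
  have h_mean (z : ℤ) : ∫⁻ ω, ‖φ + b z ω‖ₑ ^ ν ∂ℙ = ∫⁻ ω, ‖φ + b 0 ω‖ₑ ^ ν ∂ℙ :=
    ((hb_ident z).comp h_coeff).lintegral_eq
  rw [lintegral_mul_prod_eq_of_indepFun (f := fun ω => ‖innovation e X0 s ω‖ₑ ^ ν)
      (g := fun (k : ℕ) ω => ‖φ + b ((k : ℤ) + 1) ω‖ₑ ^ ν)
      (h_pow.comp h_innov_meas) (fun k => h_coeff.comp (hb_meas _))
      (h_innov_indep.comp h_pow
        (measurable_pi_lambda _ fun k => h_coeff.comp (measurable_pi_apply k)))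
      ((hb_indep.precomp (fun _ _ h => by simpa using h)).comp _ fun _ => h_coeff),
    Finset.prod_congr rfl fun (k : ℕ) _ => h_mean ((k : ℤ) + 1), Finset.prod_const, Nat.card_Ico]

theorem lintegral_innovation_le (h1 : Assumption1 ν b e X0) (s : ℕ) :
    ∫⁻ ω, ‖innovation e X0 s ω‖ₑ ^ ν ∂ℙ ≤ ∫⁻ ω, ‖X0 ω‖ₑ ^ ν ∂ℙ + ∫⁻ ω, ‖e 0 ω‖ₑ ^ ν ∂ℙ := by
  obtain ⟨-, -, -, -, -, -, -, he_ident, -⟩ := h1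
  cases s with
  | zero => exact le_self_add
  | succ s =>
    exact ((he_ident _).comp (measurable_enorm.pow_const ν)).lintegral_eq.trans_le le_add_self

theorem lintegral_enorm_Xproc_rpow_le (h1 : Assumption1 ν b e X0) (t : ℕ) :
    ∫⁻ ω, ‖Xproc φ b e X0 t ω‖ₑ ^ ν ∂ℙ ≤
      ((t : ℝ≥0∞) + 1) ^ (max 0 (ν - 1) + 1) *
        ((∫⁻ ω, ‖X0 ω‖ₑ ^ ν ∂ℙ + ∫⁻ ω, ‖e 0 ω‖ₑ ^ ν ∂ℙ) *
          max (∫⁻ ω, ‖φ + b 0 ω‖ₑ ^ ν ∂ℙ) 1 ^ t) := by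
  set K := ∫⁻ ω, ‖X0 ω‖ₑ ^ ν ∂ℙ + ∫⁻ ω, ‖e 0 ω‖ₑ ^ ν ∂ℙ
  set m := ∫⁻ ω, ‖φ + b 0 ω‖ₑ ^ ν ∂ℙ
  have h_innov_meas := measurable_innovation h1
  have h_innov_le := lintegral_innovation_le h1
  have h_factor := lintegral_innovation_mul_prod (φ := φ) h1
  obtain ⟨hb_meas, -, -, -, -, -, -, -, -, -, hν, -⟩ := h1
  have h_ne_zero : (t : ℝ≥0∞) + 1 ≠ 0 := by positivity
  have h_ne_top : (t : ℝ≥0∞) + 1 ≠ ∞ := by finiteness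
  calc _ ≤ ∫⁻ ω, ((t : ℝ≥0∞) + 1) ^ max 0 (ν - 1) * ∑ s ∈ Finset.range (t + 1),
          ‖innovation e X0 s ω‖ₑ ^ ν * ∏ k ∈ Finset.Ico s t, ‖φ + b (k + 1) ω‖ₑ ^ ν ∂ℙ :=
        lintegral_mono fun ω => enorm_Xproc_rpow_le hν φ b e X0 t ω
    _ = ((t : ℝ≥0∞) + 1) ^ max 0 (ν - 1) * ∑ s ∈ Finset.range (t + 1),
          (∫⁻ ω, ‖innovation e X0 s ω‖ₑ ^ ν ∂ℙ) * m ^ (t - s) := by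
        rw [lintegral_const_mul' _ _ (by finiteness), lintegral_finsetSum _ fun s _ => by fun_prop]
        simp_rw [h_factor]
        rfl
    _ ≤ ((t : ℝ≥0∞) + 1) ^ max 0 (ν - 1) * ∑ s ∈ Finset.range (t + 1), K * max m 1 ^ t := by
        gcongr with s hs
        · exact h_innov_le s
        · exact le_max_right _ _
        · exact le_max_left _ _
        · exact Nat.sub_le _ _
    _ = _ := by
        rw [Finset.sum_const, Finset.card_range, nsmul_eq_mul, Nat.cast_succ,
          ENNReal.rpow_add _ _ h_ne_zero h_ne_top, ENNReal.rpow_one, mul_assoc]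

theorem lintegral_enorm_coeff_rpow_le_one_of_elogZero [IsProbabilityMeasure (ℙ : Measure Ω)]
    (hν : 0 ≤ ν) (hφ : ElogZero φ (b 0)) (hb0 : ∀ᵐ ω ∂(ℙ : Measure Ω), b 0 ω = 0) :
    ∫⁻ ω, ‖φ + b 0 ω‖ₑ ^ ν ∂ℙ ≤ 1 := by
  have h_log : Real.log |φ| = 0 := by
    have h_ae : (fun ω => Real.log |φ + b 0 ω|) =ᵐ[ℙ] fun _ => Real.log |φ| :=
      hb0.mono fun ω h => by simp only [h, add_zero]
    have h_int := hφ.2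
    rwa [integral_congr_ae h_ae, integral_const, probReal_univ, one_smul] at h_int
  have h_abs : |φ| ≤ 1 := by
    rcases Real.log_eq_zero.1 h_log with h | h | h <;> linarith [abs_nonneg φ]
  have h_ae : (fun ω => ‖φ + b 0 ω‖ₑ ^ ν) =ᵐ[ℙ] fun _ => ‖φ‖ₑ ^ ν :=
    hb0.mono fun ω h => by simp only [h, add_zero]
  calc ∫⁻ ω, ‖φ + b 0 ω‖ₑ ^ ν ∂ℙ = ‖φ‖ₑ ^ ν := by
        rw [lintegral_congr_ae h_ae, lintegral_const, measure_univ, mul_one]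
    _ ≤ 1 := ENNReal.rpow_le_one (by rwa [Real.enorm_eq_ofReal_abs, ENNReal.ofReal_le_one]) hν

theorem exists_lintegral_ofReal_Xproc_rpow_le [IsProbabilityMeasure (ℙ : Measure Ω)]
    (h1 : Assumption1 ν b e X0) :
    ∃ K B : ℝ, 0 ≤ K ∧ 1 ≤ B ∧
      (ElogZero φ (b 0) ∧ (∀ᵐ ω ∂(ℙ : Measure Ω), b 0 ω = 0) → B = 1) ∧
      ∀ t : ℕ, ∫⁻ ω, ENNReal.ofReal (|Xproc φ b e X0 t ω| ^ ν) ∂ℙ ≤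
        ENNReal.ofReal (((t : ℝ) + 1) ^ (max 0 (ν - 1) + 1) * K * B ^ t) := by
  have h_moment := lintegral_enorm_Xproc_rpow_le (φ := φ) h1
  obtain ⟨hb_meas, he_meas, hX0_meas, -, -, -, -, -, -, -, hν, hb, he, hX0, -⟩ := h1
  set m := ∫⁻ ω, ‖φ + b 0 ω‖ₑ ^ ν ∂ℙ
  set K := ∫⁻ ω, ‖X0 ω‖ₑ ^ ν ∂ℙ + ∫⁻ ω, ‖e 0 ω‖ₑ ^ ν ∂ℙ
  have hm : max m 1 ≠ ∞ :=
    max_ne_top (hb.lintegral_enorm_const_add_rpow_lt_top hν (hb_meas 0).aestronglyMeasurable φ).ne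
      ENNReal.one_ne_top
  have hK : K ≠ ∞ := by
    have hX0_fin := hX0.lintegral_enorm_const_add_rpow_lt_top hν hX0_meas.aestronglyMeasurable 0
    have he_fin := he.lintegral_enorm_const_add_rpow_lt_top hν (he_meas 0).aestronglyMeasurable 0
    simp only [zero_add] at hX0_fin he_fin
    exact ENNReal.add_ne_top.2 ⟨hX0_fin.ne, he_fin.ne⟩
  refine ⟨K.toReal, (max m 1).toReal, ENNReal.toReal_nonneg, ?_, fun h => ?_, fun t => ?_⟩
  · simpa using ENNReal.toReal_mono hm (le_max_right m 1)
  · rw [max_eq_right (lintegral_enorm_coeff_rpow_le_one_of_elogZero hν.le h.1 h.2),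
      ENNReal.toReal_one]
  · simp_rw [← ENNReal.ofReal_rpow_of_nonneg (abs_nonneg _) hν.le, ← Real.enorm_eq_ofReal_abs]
    refine (h_moment t).trans_eq ?_
    rw [ENNReal.ofReal_mul (by positivity), ENNReal.ofReal_mul (by positivity),
      ← ENNReal.ofReal_rpow_of_nonneg (by positivity) (by positivity),
      ENNReal.ofReal_pow ENNReal.toReal_nonneg, ENNReal.ofReal_toReal hm,
      ENNReal.ofReal_toReal hK, mul_assoc]
    norm_cast

end Moments

end RCAR

namespace RCAR

theorem moment_bounds_nonstationary_general
    {Ω : Type*} [MeasureSpace Ω] [IsProbabilityMeasure (ℙ : Measure Ω)]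
    (φ ν : ℝ) (b e : ℤ → Ω → ℝ) (X0 : Ω → ℝ)
    (h1 : Assumption1 ν b e X0) :
    ∃ C0 C1 : ℝ, 0 < C0 ∧
      ((ElogNonneg φ (b 0) ∧ ℙ {ω | b 0 ω = 0} < 1) →
        ∀ t : ℕ, 1 ≤ t →
          ∫⁻ ω, ENNReal.ofReal (|Xproc φ b e X0 t ω| ^ ν) ∂ℙ
            ≤ ENNReal.ofReal (C1 * (t : ℝ) ^ max 0 (ν - 1) * Real.exp (C0 * t))) ∧
      ((ElogPos φ (b 0) ∧ (∀ᵐ ω ∂(ℙ : Measure Ω), b 0 ω = 0)) →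
        ∀ t : ℕ, 1 ≤ t →
          ∫⁻ ω, ENNReal.ofReal (|Xproc φ b e X0 t ω| ^ ν) ∂ℙ
            ≤ ENNReal.ofReal (C1 * (t : ℝ) ^ max 0 (ν - 1) * Real.exp (C0 * t))) ∧
      ((ElogZero φ (b 0) ∧ (∀ᵐ ω ∂(ℙ : Measure Ω), b 0 ω = 0)) →
        ∀ t : ℕ, 1 ≤ t →
          ∫⁻ ω, ENNReal.ofReal (|Xproc φ b e X0 t ω| ^ ν) ∂ℙ
            ≤ ENNReal.ofReal (C1 * (t : ℝ) ^ (1 + max 0 (ν - 1)))) := by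
  obtain ⟨K, B, hK, hB, hB_unit, h_bound⟩ := exists_lintegral_ofReal_Xproc_rpow_le (φ := φ) h1
  set q := max 0 (ν - 1)
  have hq : 0 ≤ q := le_max_left _ _
  have h_exp (t : ℕ) (ht : 1 ≤ t) :
      ((t : ℝ) + 1) ^ (q + 1) * K * B ^ t ≤ 2 ^ (q + 1) * K * (t : ℝ) ^ q * Real.exp (B * t) := by
    have := Real.add_one_rpow_mul_pow_le_two_rpow_mul_exp (B := B) hq (by linarith) ht
    calc _ = K * (((t : ℝ) + 1) ^ (q + 1) * B ^ t) := by ring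
      _ ≤ K * (2 ^ (q + 1) * (t : ℝ) ^ q * Real.exp (B * t)) := by gcongr
      _ = _ := by ring
  refine ⟨B, 2 ^ (q + 1) * K, by linarith,
    fun _ t ht => (h_bound t).trans (ENNReal.ofReal_le_ofReal (h_exp t ht)),
    fun _ t ht => (h_bound t).trans (ENNReal.ofReal_le_ofReal (h_exp t ht)),
    fun h t ht => (h_bound t).trans (ENNReal.ofReal_le_ofReal ?_)⟩
  have h_poly := Real.add_one_rpow_le_two_rpow_mul_rpow (t := t) (by exact_mod_cast ht)
    (by linarith : 0 ≤ q + 1)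
  rw [hB_unit h, one_pow, mul_one, add_comm 1 q]
  calc _ = K * ((t : ℝ) + 1) ^ (q + 1) := by ring
    _ ≤ K * (2 ^ (q + 1) * (t : ℝ) ^ (q + 1)) := by gcongr
    _ = _ := by ring

/-- Lemma `expect-vp-ha`: moment bounds for `X_t` in the nonstationary
regimes: `E|X_t|^ν = O(t^{max{0,ν-1}} e^{C₀ t})` when `E ln|φ+b₀| ≥ 0` with `P(b₀=0) < 1`
and when `E ln|φ+b₀| > 0` with `P(b₀=0) = 1`; and `E|X_t|^ν = O(t^{1+max{0,ν-1}})` when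
`E ln|φ+b₀| = 0` with `P(b₀=0) = 1`.  Here `ν` is the exponent of Assumption 1, chosen with
`ν < γ` when Assumption 4(ii) holds. -/
theorem moment_bounds_nonstationary
    {Ω : Type*} [MeasureSpace Ω] [IsProbabilityMeasure (ℙ : Measure Ω)]
    (φ ν : ℝ) (b e : ℤ → Ω → ℝ) (X0 : Ω → ℝ)
    (h1 : Assumption1 ν b e X0)
    (h3 : Assumption3 φ b e X0)
    (h4 : (ElogZero φ (b 0) ∧ (∀ᵐ ω ∂(ℙ : Measure Ω), b 0 ω = 0)) →
      (Assumption4i e X0 ∨ ∃ γ : ℝ, Assumption4ii γ e X0 ∧ ν < γ)) :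
    ∃ C0 C1 : ℝ, 0 < C0 ∧
      ((ElogNonneg φ (b 0) ∧ ℙ {ω | b 0 ω = 0} < 1) →
        ∀ t : ℕ, 1 ≤ t →
          ∫⁻ ω, ENNReal.ofReal (|Xproc φ b e X0 t ω| ^ ν) ∂ℙ
            ≤ ENNReal.ofReal (C1 * (t : ℝ) ^ max 0 (ν - 1) * Real.exp (C0 * t))) ∧
      ((ElogPos φ (b 0) ∧ (∀ᵐ ω ∂(ℙ : Measure Ω), b 0 ω = 0)) →
        ∀ t : ℕ, 1 ≤ t →
          ∫⁻ ω, ENNReal.ofReal (|Xproc φ b e X0 t ω| ^ ν) ∂ℙ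
            ≤ ENNReal.ofReal (C1 * (t : ℝ) ^ max 0 (ν - 1) * Real.exp (C0 * t))) ∧
      ((ElogZero φ (b 0) ∧ (∀ᵐ ω ∂(ℙ : Measure Ω), b 0 ω = 0)) →
        ∀ t : ℕ, 1 ≤ t →
          ∫⁻ ω, ENNReal.ofReal (|Xproc φ b e X0 t ω| ^ ν) ∂ℙ
            ≤ ENNReal.ofReal (C1 * (t : ℝ) ^ (1 + max 0 (ν - 1)))) :=
  moment_bounds_nonstationary_general φ ν b e X0 h1

end RCAR
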